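/- The Gibbs risk λ ↦ ∑ᵢ πᵢ(λ) ℓᵢ, where πᵢ(λ) = exp(-ℓᵢ/λ)/∑ⱼ exp(-ℓⱼ/λ), is monotonically nondecreasing in λ > 0. -/

import Mathlib

/-!
The Gibbs weights at temperature `λ₂` are those at `λ₁` multiplied by
`exp ((λ₁⁻¹ - λ₂⁻¹) ℓᵢ)`, a factor that is nondecreasing in `ℓᵢ` when `λ₁ ≤ λ₂`. Reweighting by a
factor that increases with `ℓ` can only raise the weighted mean of `ℓ`: this is the weighted form
of Chebyshev's sum inequality, obtained from `∑ᵢ ∑ⱼ wᵢ wⱼ (fⱼ - fᵢ)(gⱼ - gᵢ) ≥ 0`.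
-/

open Finset Real

section Chebyshev

variable {ι : Type*} {s : Finset ι} {w f g : ι → ℝ}

theorem MonovaryOn.weighted_sum_mul_sum_le_sum_mul_sum (hfg : MonovaryOn f g s)
    (hw : ∀ i ∈ s, 0 ≤ w i) :
    (∑ i ∈ s, w i * f i) * ∑ i ∈ s, w i * g i ≤ (∑ i ∈ s, w i) * ∑ i ∈ s, w i * (f i * g i) := by
  have hpair : 0 ≤ ∑ i ∈ s, ∑ j ∈ s, w i * w j * ((f j - f i) * (g j - g i)) :=
    sum_nonneg fun i hi => sum_nonneg fun j hj =>
      mul_nonneg (mul_nonneg (hw i hi) (hw j hj)) (monovaryOn_iff_forall_mul_nonneg.1 hfg hi hj)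
  have hexpand : ∑ i ∈ s, ∑ j ∈ s, w i * w j * ((f j - f i) * (g j - g i)) =
      2 * ((∑ i ∈ s, w i) * ∑ i ∈ s, w i * (f i * g i)
        - (∑ i ∈ s, w i * f i) * ∑ i ∈ s, w i * g i) := by
    calc _ = ∑ i ∈ s, ∑ j ∈ s, (w i * (w j * (f j * g j)) - w i * g i * (w j * f j)
          - w i * f i * (w j * g j) + w i * (f i * g i) * w j) :=
          sum_congr rfl fun i _ => sum_congr rfl fun j _ => by ring
      _ = _ := by
          simp only [sum_add_distrib, sum_sub_distrib, ← mul_sum, ← sum_mul]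
          ring
  linarith

theorem Finset.centerMass_le_centerMass_mul_of_monovaryOn (hgf : MonovaryOn g f s)
    (hw : ∀ i ∈ s, 0 < w i) (hg : ∀ i ∈ s, 0 < g i) :
    s.centerMass w f ≤ s.centerMass (fun i => w i * g i) f := by
  rcases s.eq_empty_or_nonempty with rfl | hs
  · simp only [centerMass_empty, le_refl]
  have hW : 0 < ∑ i ∈ s, w i := sum_pos hw hs
  have hWg : 0 < ∑ i ∈ s, w i * g i := sum_pos (fun i hi => mul_pos (hw i hi) (hg i hi)) hs
  simp only [centerMass, smul_eq_mul, inv_mul_eq_div, mul_assoc]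
  rw [div_le_div_iff₀ hW hWg, mul_comm, mul_comm (∑ i ∈ s, w i * (g i * f i))]
  exact hgf.weighted_sum_mul_sum_le_sum_mul_sum fun i hi => (hw i hi).le

end Chebyshev

theorem exp_neg_div_eq_mul_exp (x a b : ℝ) :
    exp (-x / b) = exp (-x / a) * exp ((a⁻¹ - b⁻¹) * x) := by
  rw [← exp_add]; ring_nf

theorem gibbs_risk_monotone (n : ℕ) (ℓ : Fin n → ℝ) (lam₁ lam₂ : ℝ)
    (h₁ : 0 < lam₁) (h₁₂ : lam₁ ≤ lam₂) :
    ∑ i, (Real.exp (-ℓ i / lam₁) / ∑ j, Real.exp (-ℓ j / lam₁)) * ℓ i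
      ≤ ∑ i, (Real.exp (-ℓ i / lam₂) / ∑ j, Real.exp (-ℓ j / lam₂)) * ℓ i := by
  have hc : 0 ≤ lam₁⁻¹ - lam₂⁻¹ := sub_nonneg.2 (inv_anti₀ h₁ h₁₂)
  have htilt : Monovary (fun i => exp ((lam₁⁻¹ - lam₂⁻¹) * ℓ i)) ℓ :=
    (monovary_self ℓ).comp_monotone_left (exp_monotone.comp (monotone_mul_left_of_nonneg hc))
  have hmean := univ.centerMass_le_centerMass_mul_of_monovaryOn (htilt.monovaryOn _)
    (fun i _ => exp_pos (-ℓ i / lam₁)) (fun i _ => exp_pos _)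
  simp only [centerMass, smul_eq_mul, ← exp_neg_div_eq_mul_exp] at hmean
  simpa only [mul_sum, div_eq_inv_mul, mul_assoc] using hmean
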